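/- arXiv:math/0509206 — 5 statements merged into one kernel-verified Lean document; each statement's English description precedes it below -/
import Mathlib

section
/- Let S be the group of all permutations of an infinite set X, viewed as a monoid of unary functions. If f : X² → X is a binary polymorphism of S (i.e., f(α(x), β(x)) defines a permutation of X for all permutations α, β), then for all x, y ∈ X, f(x,y) ∈ {f(x,x), f(y,y)}. -/
/-- If `f` is a binary polymorphism of the symmetric group on an infinite set `X`,
then `f (x, y) ∈ {f (x, x), f (y, y)}` for all `x, y`. -/
theorem stmt_8 {X : Type*} [Infinite X] (f : X → X → X)
    (hpol : ∀ α β : Equiv.Perm X, Function.Bijective (fun x => f (α x) (β x))) :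
    ∀ x y : X, f x y = f x x ∨ f x y = f y y := by
  classical
  intro x y
  obtain ⟨t, ht⟩ := (hpol 1 1).2 (f x y)
  simp only [Equiv.Perm.one_apply] at ht
  by_cases hx : t = x
  · left; rw [← ht, hx]
  by_cases hy : t = y
  · right; rw [← ht, hy]
  · exfalso
    have h := (hpol 1 (Equiv.swap x y)).1
    have key : (fun z => f ((1 : Equiv.Perm X) z) (Equiv.swap x y z)) x
        = (fun z => f ((1 : Equiv.Perm X) z) (Equiv.swap x y z)) t := by
      simp only [Equiv.Perm.one_apply]
      rw [Equiv.swap_apply_left, Equiv.swap_apply_of_ne_of_ne hx hy, ht]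
    exact hx (h key).symm
end

section
/- Let S be the group of all permutations of an infinite set X. If f : X² → X is a binary polymorphism of S, and x, y ∈ X are distinct with f(x,y) = f(x,x), then f(y,x) = f(y,y). -/
lemma stmt_9_dich {X : Type*} (f : X → X → X)
    (hpol : ∀ α β : Equiv.Perm X, Function.Bijective (fun x => f (α x) (β x)))
    (u v : X) : f u v = f u u ∨ f u v = f v v := by
  classical
  by_contra hc
  push_neg at hc
  obtain ⟨h1, h2⟩ := hc
  have huv : u ≠ v := by
    rintro rfl; exact h1 rfl
  -- diagonal map is surjective
  obtain ⟨z, hz⟩ := (hpol 1 1).2 (f u v)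
  simp only [Equiv.Perm.coe_one, id_eq] at hz
  have hzu : z ≠ u := by rintro rfl; exact h1 hz.symm
  have hzv : z ≠ v := by rintro rfl; exact h2 hz.symm
  -- injectivity with swap u v in second coordinate
  have hinj := (hpol 1 (Equiv.swap u v)).1
  have hu : f ((1 : Equiv.Perm X) u) (Equiv.swap u v u) = f u v := by
    simp
  have hzz : f ((1 : Equiv.Perm X) z) (Equiv.swap u v z) = f u v := by
    rw [Equiv.swap_apply_of_ne_of_ne hzu hzv]
    simpa using hz
  have : u = z := hinj (hu.trans hzz.symm)
  exact hzu this.symm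

/-- If `f` is a binary polymorphism of the symmetric group on an infinite set `X`,
`x ≠ y` and `f x y = f x x`, then `f y x = f y y`. -/
theorem stmt_9 {X : Type*} [Infinite X] (f : X → X → X)
    (hpol : ∀ α β : Equiv.Perm X, Function.Bijective (fun x => f (α x) (β x)))
    (x y : X) (hxy : x ≠ y) (h : f x y = f x x) :
    f y x = f y y := by
  classical
  rcases stmt_9_dich f hpol y x with h' | h'
  · -- f y x = f y y : done
    exact h'
  · -- f y x = f x x : contradiction via swap in first coordinate
    exfalso
    have hinj := (hpol (Equiv.swap x y) 1).1
    have hx : f (Equiv.swap x y x) ((1 : Equiv.Perm X) x) = f x x := by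
      simpa using h'
    have hy : f (Equiv.swap x y y) ((1 : Equiv.Perm X) y) = f x x := by
      simpa using h
    exact hxy (hinj (hx.trans hy.symm))
end

section
/- Let X be an infinite set and S the group of all permutations of X. Every binary polymorphism of S is essentially unary: if f : X² → X satisfies that z ↦ f(α(z), β(z)) is a permutation for all α, β ∈ S, then f(x,y) = f(x,x) for all x, y ∈ X, or f(x,y) = f(y,y) for all x, y ∈ X. -/
set_option linter.unusedSectionVars false

section Aux
variable {X : Type*} [Infinite X]

/-- `f x y` is always `f x x` or `f y y`. -/
lemma aux0 (f : X → X → X)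
    (hpol : ∀ α β : Equiv.Perm X, Function.Bijective (fun x => f (α x) (β x)))
    (x y : X) : f x y = f x x ∨ f x y = f y y := by
  classical
  by_cases hxy : x = y
  · subst hxy; left; rfl
  by_contra hc
  push_neg at hc
  obtain ⟨h1, h2⟩ := hc
  have hg : Function.Bijective (fun x : X => f x x) := by simpa using hpol 1 1
  obtain ⟨z, hz⟩ := hg.2 (f x y)
  simp only at hz
  have hzx : z ≠ x := fun h => h1 (by rw [h] at hz; exact hz.symm)
  have hzy : z ≠ y := fun h => h2 (by rw [h] at hz; exact hz.symm)
  set α := Equiv.swap x z with hα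
  set β := Equiv.swap x z * Equiv.swap z y with hβ
  have hinj := (hpol α β).1
  have e1 : f (α z) (β z) = f x y := by
    have : α z = x := Equiv.swap_apply_right x z
    have hb : β z = y := by
      simp [hβ, Equiv.Perm.mul_apply, Equiv.swap_apply_left,
        Equiv.swap_apply_of_ne_of_ne (Ne.symm hxy) hzy.symm]
    rw [this, hb]
  have e2 : f (α x) (β x) = f x y := by
    have ha : α x = z := Equiv.swap_apply_left x z
    have hb : β x = z := by
      simp [hβ, Equiv.Perm.mul_apply,
        Equiv.swap_apply_of_ne_of_ne hzx.symm hxy, Equiv.swap_apply_left]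
    rw [ha, hb, hz]
  exact hzx (hinj (e1.trans e2.symm))

/-- pair dichotomy -/
lemma auxA (f : X → X → X)
    (hpol : ∀ α β : Equiv.Perm X, Function.Bijective (fun x => f (α x) (β x)))
    {a b : X} (hab : a ≠ b) :
    (f a b = f a a ∧ f b a = f b b) ∨ (f a b = f b b ∧ f b a = f a a) := by
  classical
  have hinj := (hpol 1 (Equiv.swap a b)).1
  have ha : f ((1 : Equiv.Perm X) a) (Equiv.swap a b a) = f a b := by
    simp [Equiv.swap_apply_left]
  have hb : f ((1 : Equiv.Perm X) b) (Equiv.swap a b b) = f b a := by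
    simp [Equiv.swap_apply_right]
  rcases aux0 f hpol a b with h1 | h1 <;> rcases aux0 f hpol b a with h2 | h2
  · exact Or.inl ⟨h1, h2⟩
  · exact absurd (hinj (show f ((1:Equiv.Perm X) a) (Equiv.swap a b a) =
      f ((1:Equiv.Perm X) b) (Equiv.swap a b b) by rw [ha, hb, h1, h2])) hab
  · exact absurd (hinj (show f ((1:Equiv.Perm X) a) (Equiv.swap a b a) =
      f ((1:Equiv.Perm X) b) (Equiv.swap a b b) by rw [ha, hb, h1, h2])) hab
  · exact Or.inr ⟨h1, h2⟩

/-- propagation of the "left" type along a fresh element -/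
lemma auxB (f : X → X → X)
    (hpol : ∀ α β : Equiv.Perm X, Function.Bijective (fun x => f (α x) (β x)))
    {a b c : X} (hab : a ≠ b) (hca : c ≠ a) (hcb : c ≠ b)
    (hL : f a b = f a a ∧ f b a = f b b) :
    (f a c = f a a ∧ f c a = f c c) ∧ (f b c = f b b ∧ f c b = f c c) := by
  classical
  have hg : Function.Bijective (fun x : X => f x x) := by simpa using hpol 1 1
  set β := Equiv.swap a c * Equiv.swap a b with hβ
  have hβa : β a = b := by
    simp [hβ, Equiv.Perm.mul_apply, Equiv.swap_apply_left,
      Equiv.swap_apply_of_ne_of_ne hab.symm hcb.symm]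
  have hβb : β b = c := by
    simp [hβ, Equiv.Perm.mul_apply, Equiv.swap_apply_right, Equiv.swap_apply_left]
  have hβc : β c = a := by
    simp [hβ, Equiv.Perm.mul_apply,
      Equiv.swap_apply_of_ne_of_ne hca hcb, Equiv.swap_apply_right]
  have hinj := (hpol 1 β).1
  have ea : f ((1 : Equiv.Perm X) a) (β a) = f a a := by simp [hβa, hL.1]
  -- f c a = f c c
  have hca' : f c a = f c c := by
    rcases aux0 f hpol c a with h | h
    · exact h
    · exact absurd (hinj (by simp only [Equiv.Perm.one_apply] at ea ⊢; rw [hβc, h, ← ea])) hca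
  -- f b c = f b b
  have hbc' : f b c = f b b := by
    rcases aux0 f hpol b c with h | h
    · exact h
    · refine absurd (hinj (?_ : f ((1:Equiv.Perm X) b) (β b) = f ((1:Equiv.Perm X) c) (β c))) hcb.symm
      simp only [Equiv.Perm.one_apply]
      rw [hβb, hβc, h, hca']
  refine ⟨⟨?_, hca'⟩, ⟨hbc', ?_⟩⟩
  · rcases auxA f hpol hca.symm with h | h
    · exact h.1
    · exact absurd (hg.1 (hca'.symm.trans h.2)) hca
  · rcases auxA f hpol (Ne.symm hcb) with h | h
    · exact h.2
    · exact absurd (hg.1 (hbc'.symm.trans h.1)) (Ne.symm hcb)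

/-- one "left" pair forces all pairs to be left -/
lemma auxC (f : X → X → X)
    (hpol : ∀ α β : Equiv.Perm X, Function.Bijective (fun x => f (α x) (β x)))
    {a b : X} (hab : a ≠ b) (hL : f a b = f a a ∧ f b a = f b b) :
    ∀ x y : X, x ≠ y → f x y = f x x ∧ f y x = f y y := by
  classical
  intro x y hxy
  obtain ⟨e, he⟩ := Infinite.exists_notMem_finset ({a, b, x, y} : Finset X)
  simp only [Finset.mem_insert, Finset.mem_singleton, not_or] at he
  obtain ⟨hea, heb, hex, hey⟩ := he
  have hLae : f a e = f a a ∧ f e a = f e e :=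
    (auxB f hpol hab hea heb hL).1
  by_cases hxa : x = a
  · subst hxa
    exact (auxB f hpol (Ne.symm hea) hxy.symm (Ne.symm hey) hLae).1
  · have hLex : f e x = f e e ∧ f x e = f x x :=
      (auxB f hpol (Ne.symm hea) hxa (fun h => hex h.symm) hLae).2
    exact (auxB f hpol (fun h => hex h.symm) hxy.symm (Ne.symm hey)
      ⟨hLex.2, hLex.1⟩).1

end Aux

/-- Every binary polymorphism of the symmetric group on an infinite set `X` is
essentially unary. -/
theorem stmt_10 {X : Type*} [Infinite X] (f : X → X → X)
    (hpol : ∀ α β : Equiv.Perm X, Function.Bijective (fun x => f (α x) (β x))) :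
    (∀ x y : X, f x y = f x x) ∨ (∀ x y : X, f x y = f y y) := by
  obtain ⟨a, b, hab⟩ := exists_pair_ne X
  rcases auxA f hpol hab with hL | hR
  · left
    intro x y
    by_cases hxy : x = y
    · subst hxy; rfl
    · exact (auxC f hpol hab hL x y hxy).1
  · right
    have hpol' : ∀ α β : Equiv.Perm X,
        Function.Bijective (fun x => (fun u v => f v u) (α x) (β x)) := by
      intro α β; exact hpol β α
    intro x y
    by_cases hxy : x = y
    · subst hxy; rfl
    · exact (auxC (fun u v => f v u) hpol' hab ⟨hR.2, hR.1⟩ y x (Ne.symm hxy)).1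
end

section
/- Let L be a complete chain (a linearly ordered complete lattice). Then L is an algebraic lattice if and only if below every element p ∈ L with p not the smallest element, the set of successor elements ≤ p is cofinal from below in the sense that p = sup of the successors and bottom elements ≤ p; equivalently, the compact elements of L are exactly the successors and the smallest element, and L is algebraic iff every element is a supremum of successors and the bottom element below it. -/
/-!
In a complete chain the directed sets are just the nonempty sets. If `q ⋖ k` and
`k ≤ sSup s`, then `q < sSup s`, so some member of `s` exceeds `q` and hence lies above `k`:
successors are compact. Conversely, if `k ≠ ⊥` is not a successor then `k = sSup (Iio k)`,
and the nonempty chain `Iio k` has no member above `k`, so `k` is not compact. Once the compact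
elements are known to be `⊥` and the successors, both algebraicity conditions quantify over the
same sets.
-/

/-- `k` is a successor in a chain: there is `q < k` with nothing strictly between. -/
def IsSuccessorElt {L : Type*} [CompleteLinearOrder L] (k : L) : Prop :=
  ∃ q, q < k ∧ ∀ r, q < r → r ≤ k → r = k

open Order Set CompleteLattice

section

variable {L : Type*} [CompleteLinearOrder L]

theorem isSuccessorElt_iff_not_isSuccPrelimit {k : L} :
    IsSuccessorElt k ↔ ¬IsSuccPrelimit k := by
  rw [not_isSuccPrelimit_iff]
  refine exists_congr fun q => and_congr_right fun hqk => ⟨fun h r hqr hrk => ?_, ?_⟩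
  · exact (h r hqr hrk.le).not_lt hrk
  · exact fun h r hqr hrk => hrk.eq_or_lt.resolve_right (h hqr)

theorem isCompactElement_bot : IsCompactElement (⊥ : L) :=
  (isCompactElement_iff_le_of_directed_sSup_le L ⊥).2 fun _ ⟨x, hx⟩ _ _ => ⟨x, hx, bot_le⟩

theorem CovBy.isCompactElement {q k : L} (hqk : q ⋖ k) : IsCompactElement k := by
  refine (isCompactElement_iff_le_of_directed_sSup_le L k).2 fun s _ _ hks => ?_
  obtain ⟨x, hxs, hqx⟩ := lt_sSup_iff.1 (hqk.lt.trans_le hks)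
  exact ⟨x, hxs, hqk.ge_of_gt hqx⟩

theorem IsCompactElement.not_isSuccPrelimit {k : L} (hk : IsCompactElement k) (hbot : k ≠ ⊥) :
    ¬IsSuccPrelimit k := by
  intro hlim
  obtain ⟨x, hxk, hkx⟩ := (isCompactElement_iff_le_of_directed_sSup_le L k).1 hk (Iio k)
    ⟨⊥, bot_lt_iff_ne_bot.2 hbot⟩ (.of_linearOrder _)
    (sSup_Iio_eq_self_iff_isSuccPrelimit.2 hlim).ge
  exact (hkx.trans_lt hxk).false

theorem isCompactElement_iff_eq_bot_or_isSuccessorElt {k : L} :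
    IsCompactElement k ↔ k = ⊥ ∨ IsSuccessorElt k := by
  rw [isSuccessorElt_iff_not_isSuccPrelimit, or_iff_not_imp_left]
  refine ⟨fun hk hbot => hk.not_isSuccPrelimit hbot, fun h => ?_⟩
  rcases eq_or_ne k ⊥ with rfl | hbot
  · exact isCompactElement_bot
  · obtain ⟨q, hqk⟩ := not_isSuccPrelimit_iff.1 (h hbot)
    exact hqk.isCompactElement

end

/-- In a complete chain, the compact elements are exactly the successors together
with the bottom element, and the chain is algebraic iff every element is the
supremum of the successors and bottom elements below it. -/
theorem stmt_16 {L : Type*} [CompleteLinearOrder L] :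
    (∀ k : L, IsCompactElement k ↔ (k = ⊥ ∨ IsSuccessorElt k)) ∧
    ((∀ p : L, p = sSup {k | k ≤ p ∧ IsCompactElement k}) ↔
      (∀ p : L, p = sSup {k | k ≤ p ∧ (k = ⊥ ∨ IsSuccessorElt k)})) := by
  simp only [isCompactElement_iff_eq_bot_or_isSuccessorElt, iff_self, implies_true, and_self]
end

section
/- Let X be a linearly ordered set with at least two elements, and let min, max : X² → X denote the minimum and maximum operations and med : X³ → X the median. Then the clone generated by {min, med} intersected with the clone generated by {max} equals the clone of projections. -/
/-!
Every operation in the clone of `{min, med}` preserves, for each `a`, the binary relation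
`x ≤ a ∨ y ≤ a`, since `min` and `med` do. Every operation in the clone of `{max}` is the
join of a nonempty set `S` of its variables. If `S` contained two variables `i ≠ j`, pick
`a < b` and feed it the tuples that are `b` at `i` (resp. `j`) and `a` elsewhere: they are
related coordinatewise, but both values are `b`, so the relation is not preserved.
Hence an operation in both clones is a projection.
-/

def Operation (X : Type*) := Σ n : ℕ, ((Fin (n+1) → X) → X)

def IsClone {X : Type*} (C : Set (Operation X)) : Prop :=
  (∀ (n : ℕ) (k : Fin (n+1)), (⟨n, fun x => x k⟩ : Operation X) ∈ C) ∧
  (∀ (f : Operation X) (m : ℕ) (g : Fin (f.1+1) → ((Fin (m+1) → X) → X)),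
     f ∈ C → (∀ i, (⟨m, g i⟩ : Operation X) ∈ C) →
     (⟨m, fun x => f.2 (fun i => g i x)⟩ : Operation X) ∈ C)

def part {X : Type*} (C : Set (Operation X)) (n : ℕ) : Set ((Fin (n+1) → X) → X) :=
  {f | (⟨n, f⟩ : Operation X) ∈ C}

def cloneGen {X : Type*} (F : Set (Operation X)) : Set (Operation X) :=
  ⋂₀ {C | IsClone C ∧ F ⊆ C}

def Proj (X : Type*) : Set (Operation X) :=
  {op | ∃ (n : ℕ) (k : Fin (n+1)), op = ⟨n, fun x => x k⟩}

def minOp (X : Type*) [LinearOrder X] : Operation X :=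
  ⟨1, fun x => min (x 0) (x 1)⟩

def maxOp (X : Type*) [LinearOrder X] : Operation X :=
  ⟨1, fun x => max (x 0) (x 1)⟩

def medOp (X : Type*) [LinearOrder X] : Operation X :=
  ⟨2, fun x => max (min (x 0) (x 1)) (min (max (x 0) (x 1)) (x 2))⟩

section CloneGen

variable {X : Type*}

lemma cloneGen_subset_of_isClone {F C : Set (Operation X)} (hC : IsClone C) (hF : F ⊆ C) :
    cloneGen F ⊆ C :=
  fun _ hop => hop C ⟨hC, hF⟩

lemma proj_subset_cloneGen (F : Set (Operation X)) : Proj X ⊆ cloneGen F := by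
  rintro op ⟨n, k, rfl⟩ C ⟨hC, -⟩
  exact hC.1 n k

end CloneGen

section PreservesLeOr

variable {X : Type*} [LinearOrder X]

/-- The polymorphisms of the binary relation `{(x, y) | x ≤ a ∨ y ≤ a}`. -/
def PreservesLeOr (a : X) : Set (Operation X) :=
  {op | ∀ x y : Fin (op.1+1) → X, (∀ i, x i ≤ a ∨ y i ≤ a) → op.2 x ≤ a ∨ op.2 y ≤ a}

lemma isClone_preservesLeOr (a : X) : IsClone (PreservesLeOr a) :=
  ⟨fun _ k _ _ h => h k, fun _ _ _ hf hg x y h => hf _ _ fun i => hg i x y h⟩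

lemma minOp_mem_preservesLeOr (a : X) : minOp X ∈ PreservesLeOr a :=
  fun _ _ h => (h 0).imp min_le_of_left_le min_le_of_left_le

-- The median is `≤ a` iff two of its arguments are, and by pigeonhole `x` or `y` has two such.
lemma medOp_mem_preservesLeOr (a : X) : medOp X ∈ PreservesLeOr a := by
  intro x y h
  simp only [medOp, max_le_iff, min_le_iff]
  have h0 := h 0
  have h1 := h 1
  have h2 := h 2
  tauto

lemma cloneGen_minOp_medOp_subset_preservesLeOr (a : X) :
    cloneGen {minOp X, medOp X} ⊆ PreservesLeOr a :=
  cloneGen_subset_of_isClone (isClone_preservesLeOr a) <| by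
    rintro op (rfl | rfl)
    · exact minOp_mem_preservesLeOr a
    · exact medOp_mem_preservesLeOr a

end PreservesLeOr

section SupOfVars

variable (X : Type*) [LinearOrder X]

def SupOfVars : Set (Operation X) :=
  {op | ∃ S : Finset (Fin (op.1+1)), ∃ hS : S.Nonempty, ∀ x, op.2 x = S.sup' hS x}

lemma isClone_supOfVars : IsClone (SupOfVars X) := by
  refine ⟨fun n k => ⟨{k}, Finset.singleton_nonempty k, fun x => (Finset.sup'_singleton x).symm⟩,
    fun f m g hf hg => ?_⟩
  obtain ⟨S, hS, hfS⟩ := hf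
  choose T hT hgT using hg
  refine ⟨S.biUnion T, hS.biUnion fun i _ => hT i, fun x => ?_⟩
  rw [hfS, Finset.sup'_biUnion _ hS hT]
  exact Finset.sup'_congr _ rfl fun i _ => hgT i x

lemma maxOp_mem_supOfVars : maxOp X ∈ SupOfVars X :=
  ⟨{0, 1}, by simp, fun x => by
    rw [Finset.sup'_insert (H := Finset.singleton_nonempty _), Finset.sup'_singleton]; rfl⟩

lemma cloneGen_maxOp_subset_supOfVars : cloneGen {maxOp X} ⊆ SupOfVars X :=
  cloneGen_subset_of_isClone (isClone_supOfVars X) <| by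
    rintro op rfl
    exact maxOp_mem_supOfVars X

end SupOfVars

lemma card_le_one_of_sup'_mem_preservesLeOr {X : Type*} [LinearOrder X] {a b : X} (hab : a < b)
    {n : ℕ} {f : (Fin (n+1) → X) → X} {S : Finset (Fin (n+1))} (hS : S.Nonempty)
    (hfS : ∀ x, f x = S.sup' hS x) (hpres : (⟨n, f⟩ : Operation X) ∈ PreservesLeOr a) :
    S.card ≤ 1 := by
  refine Finset.card_le_one.mpr fun i hi j hj => by_contra fun hij => ?_
  let e : Fin (n+1) → Fin (n+1) → X := fun l k => if k = l then b else a
  have hrel : ∀ k, e i k ≤ a ∨ e j k ≤ a := by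
    intro k
    by_cases hk : k = i
    · subst hk; simp [e, hij]
    · simp [e, hk]
  have hsup : ∀ i ∈ S, b ≤ f (e i) := fun i hi =>
    (hfS (e i)).symm ▸ le_of_eq_of_le (by simp [e]) (Finset.le_sup' (e i) hi)
  rcases hpres (e i) (e j) hrel with h | h
  · exact (hab.trans_le ((hsup i hi).trans h)).false
  · exact (hab.trans_le ((hsup j hj).trans h)).false

lemma mem_proj_of_mem_supOfVars_of_mem_preservesLeOr {X : Type*} [LinearOrder X] {a b : X}
    (hab : a < b) {op : Operation X} (hsup : op ∈ SupOfVars X) (hpres : op ∈ PreservesLeOr a) :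
    op ∈ Proj X := by
  obtain ⟨n, f⟩ := op
  obtain ⟨S, hS, hfS⟩ := hsup
  obtain ⟨k, rfl⟩ := Finset.card_eq_one.mp <|
    (card_le_one_of_sup'_mem_preservesLeOr hab hS hfS hpres).antisymm hS.card_pos
  have hf : f = fun x => x k := funext fun x => (hfS x).trans (Finset.sup'_singleton x)
  exact ⟨n, k, hf ▸ rfl⟩

/-- On a linearly ordered set with at least two elements, the clone generated by
`{min, med}` intersected with the clone generated by `{max}` is the clone of
projections. -/
theorem stmt_18 {X : Type*} [LinearOrder X] [Nontrivial X] :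
    cloneGen {minOp X, medOp X} ∩ cloneGen {maxOp X} = Proj X := by
  obtain ⟨a, b, hab⟩ := exists_pair_lt X
  refine subset_antisymm (fun op ⟨hminMed, hmax⟩ => ?_)
    fun op hop => ⟨proj_subset_cloneGen _ hop, proj_subset_cloneGen _ hop⟩
  exact mem_proj_of_mem_supOfVars_of_mem_preservesLeOr hab
    (cloneGen_maxOp_subset_supOfVars X hmax) (cloneGen_minOp_medOp_subset_preservesLeOr a hminMed)
end
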